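/- arXiv:math/0405310 — 2 statements merged into one kernel-verified Lean document; each statement's English description precedes it below -/
import Mathlib

section
/- There exist 32 points p₁, …, p₃₂ in the unit square [0,1]² ⊆ ℝ² such that ‖pᵢ − pⱼ‖ ≥ 0.213 for all i ≠ j. -/
/-!
The witness is an explicit configuration on the grid `10⁻⁶ ℤ²`. Clearing the denominator turns
membership in the square and the `496` distance bounds into inequalities between integers,
which the kernel checks by evaluation.
-/

noncomputable def gridPoint {n : ℕ} (N : ℕ) (z : Fin n → ℤ) : EuclideanSpace ℝ (Fin n) :=
  WithLp.toLp 2 fun t => (z t : ℝ) / N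

lemma gridPoint_apply {n : ℕ} (N : ℕ) (z : Fin n → ℤ) (t : Fin n) :
    gridPoint N z t = (z t : ℝ) / N := rfl

lemma gridPoint_mem_Icc {n : ℕ} {N : ℕ} {z : Fin n → ℤ} {t : Fin n}
    (h₀ : 0 ≤ z t) (h₁ : z t ≤ N) : gridPoint N z t ∈ Set.Icc (0 : ℝ) 1 := by
  rw [gridPoint_apply]
  rcases Nat.eq_zero_or_pos N with rfl | hN
  · simp
  · exact ⟨by positivity, (div_le_one (by positivity)).2 (by exact_mod_cast h₁)⟩

lemma div_le_norm_gridPoint_sub {n : ℕ} {N d : ℕ} {z w : Fin n → ℤ}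
    (h : (d : ℤ) ^ 2 ≤ ∑ t, (z t - w t) ^ 2) :
    (d : ℝ) / N ≤ ‖gridPoint N z - gridPoint N w‖ := by
  have hsq : ((d : ℝ) / N) ^ 2 ≤ ∑ t, ((z t - w t : ℝ) / N) ^ 2 := by
    simp only [div_pow, ← Finset.sum_div]
    gcongr
    exact_mod_cast h
  rw [EuclideanSpace.norm_eq]
  exact Real.le_sqrt_of_sq_le (by simpa [gridPoint_apply, sub_div] using hsq)

def spread32 : Fin 32 → Fin 2 → ℤ := ![
  ![389238, 106554],
  ![0, 59313],
  ![0, 485523],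
  ![0, 698628],
  ![786895, 213105],
  ![205633, 429587],
  ![573790, 213111],
  ![727582, 1000000],
  ![679459, 611274],
  ![204685, 0],
  ![573784, 426216],
  ![1000000, 0],
  ![0, 1000000],
  ![786889, 426210],
  ![786895, 0],
  ![301372, 1000000],
  ![893446, 610762],
  ![416405, 583483],
  ![151405, 848595],
  ![570413, 794367],
  ![388726, 320541],
  ![514477, 1000000],
  ![1000000, 795315],
  ![786894, 795316],
  ![206334, 642691],
  ![573791, 0],
  ![0, 272418],
  ![357309, 793666],
  ![1000000, 426209],
  ![940687, 1000000],
  ![1000000, 213105],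
  ![204684, 213106]]

lemma spread32_mem_Icc (i : Fin 32) (t : Fin 2) : 0 ≤ spread32 i t ∧ spread32 i t ≤ 1000000 := by
  revert i t
  decide

lemma spread32_separated : ∀ i j : Fin 32, i ≠ j →
    (213000 : ℤ) ^ 2 ≤ ∑ t, (spread32 i t - spread32 j t) ^ 2 := by
  simp only [Fin.sum_univ_two]
  decide

/-- There exist 32 points in the unit square `[0,1]²` with all pairwise
Euclidean distances at least 0.213 (point-spreading form of the improved
packing of 32 equal disks in a square). -/
theorem packing_32_disks :
    ∃ p : Fin 32 → EuclideanSpace ℝ (Fin 2),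
      (∀ i, ∀ t : Fin 2, p i t ∈ Set.Icc (0 : ℝ) 1) ∧
      ∀ i j, i ≠ j → (0.213 : ℝ) ≤ ‖p i - p j‖ := by
  refine ⟨fun i => gridPoint 1000000 (spread32 i), fun i t => ?_, fun i j hij => ?_⟩
  · obtain ⟨h₀, h₁⟩ := spread32_mem_Icc i t
    exact gridPoint_mem_Icc h₀ h₁
  · calc (0.213 : ℝ) = (213000 : ℕ) / (1000000 : ℕ) := by norm_num
      _ ≤ _ := div_le_norm_gridPoint_sub (spread32_separated i j hij)
end

section
/- There exist 48 points p₁, …, p₄₈ in the unit square [0,1]² ⊆ ℝ² such that ‖pᵢ − pⱼ‖ ≥ 0.168 for all i ≠ j. -/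
/-!
Place 6 points per row, 0.18 apart, in 8 rows at heights `r / 7`, shifting the odd rows by
half a column. Measured in units `(0.09, 1/7)` a point has integer coordinates `(m, n)` with
`m ≡ n [ZMOD 2]`, so a nonzero difference either lies in one row (`|m| ≥ 2`, distance `≥ 0.18`),
joins adjacent rows (`|m| ≥ 1`, distance `≥ √(0.09² + 1/49) > 0.1688`) or spans two rows or more
(distance `≥ 2/7`).
-/

lemma int_sq_cases_of_even_sub {m n : ℤ} (hmn : Even (m - n)) (hne : m ≠ 0 ∨ n ≠ 0) :
    (n = 0 ∧ 4 ≤ m ^ 2) ∨ (n ^ 2 = 1 ∧ 1 ≤ m ^ 2) ∨ 4 ≤ n ^ 2 := by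
  have one_le_sq {z : ℤ} (hz : z ≠ 0) : 1 ≤ z ^ 2 :=
    (one_le_sq_iff_one_le_abs z).2 (Int.one_le_abs hz)
  rw [Int.even_iff] at hmn
  rcases (show n = 0 ∨ n = 1 ∨ n = -1 ∨ 2 ≤ n ∨ n ≤ -2 by omega) with rfl | rfl | rfl | hn | hn
  · obtain ⟨t, rfl⟩ : ∃ t, m = 2 * t := ⟨m / 2, by omega⟩
    exact Or.inl ⟨rfl, by nlinarith [one_le_sq (show t ≠ 0 by omega)]⟩
  · exact Or.inr (Or.inl ⟨by norm_num, one_le_sq (by omega)⟩)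
  · exact Or.inr (Or.inl ⟨by norm_num, one_le_sq (by omega)⟩)
  all_goals exact Or.inr (Or.inr (by nlinarith))

lemma sq_le_add_sq_of_even_sub {δ a b : ℝ} (ha : δ ^ 2 ≤ a ^ 2) (hb : δ ^ 2 ≤ (2 * b) ^ 2)
    (hab : δ ^ 2 ≤ (a / 2) ^ 2 + b ^ 2) {m n : ℤ} (hmn : Even (m - n)) (hne : m ≠ 0 ∨ n ≠ 0) :
    δ ^ 2 ≤ (a / 2 * m) ^ 2 + (b * n) ^ 2 := by
  rcases int_sq_cases_of_even_sub hmn hne with ⟨rfl, hm⟩ | ⟨hn, hm⟩ | hn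
  · have hm : (4 : ℝ) ≤ (m : ℝ) ^ 2 := by exact_mod_cast hm
    nlinarith [mul_le_mul_of_nonneg_left hm (sq_nonneg a)]
  · have hn : (n : ℝ) ^ 2 = 1 := by exact_mod_cast hn
    have hm : (1 : ℝ) ≤ (m : ℝ) ^ 2 := by exact_mod_cast hm
    nlinarith [mul_le_mul_of_nonneg_left hm (sq_nonneg a)]
  · have hn : (4 : ℝ) ≤ (n : ℝ) ^ 2 := by exact_mod_cast hn
    nlinarith [mul_le_mul_of_nonneg_left hn (sq_nonneg b), sq_nonneg (a / 2 * m)]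

noncomputable def staggeredGrid (a b : ℝ) (k r : ℤ) : EuclideanSpace ℝ (Fin 2) :=
  !₂[a / 2 * (2 * k + r % 2 : ℤ), b * r]

lemma dist_staggeredGrid (a b : ℝ) (k r k' r' : ℤ) :
    dist (staggeredGrid a b k r) (staggeredGrid a b k' r') =
      √((a / 2 * (2 * k + r % 2 - (2 * k' + r' % 2) : ℤ)) ^ 2 + (b * (r - r' : ℤ)) ^ 2) := by
  simp only [EuclideanSpace.dist_eq, staggeredGrid, Fin.sum_univ_two, Real.dist_eq, sq_abs,
    Matrix.cons_val_zero, Matrix.cons_val_one, Matrix.cons_val_fin_one]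
  push_cast
  ring_nf

lemma le_dist_staggeredGrid {δ a b : ℝ} (hδ : 0 ≤ δ) (ha : δ ^ 2 ≤ a ^ 2)
    (hb : δ ^ 2 ≤ (2 * b) ^ 2) (hab : δ ^ 2 ≤ (a / 2) ^ 2 + b ^ 2) {k r k' r' : ℤ}
    (hne : (k, r) ≠ (k', r')) :
    δ ≤ dist (staggeredGrid a b k r) (staggeredGrid a b k' r') := by
  rw [dist_staggeredGrid, Real.le_sqrt hδ (by positivity)]
  refine sq_le_add_sq_of_even_sub ha hb hab ?_ ?_
  · rw [Int.even_iff]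
    omega
  · by_contra! h
    exact hne (Prod.ext (by omega) (by omega))

lemma staggeredGrid_mem_Icc {a b : ℝ} (ha : 0 ≤ a) (hb : 0 ≤ b) {c R : ℕ}
    (hc : a / 2 * (2 * c - 1) ≤ 1) (hR : b * (R - 1) ≤ 1) {k r : ℤ}
    (hk : k ∈ Set.Ico 0 (c : ℤ)) (hr : r ∈ Set.Ico 0 (R : ℤ)) (t : Fin 2) :
    staggeredGrid a b k r t ∈ Set.Icc (0 : ℝ) 1 := by
  obtain ⟨hk0, hkc⟩ := hk
  obtain ⟨hr0, hrR⟩ := hr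
  fin_cases t
  · have h0 : (0 : ℝ) ≤ (2 * k + r % 2 : ℤ) := by exact_mod_cast (by omega : 0 ≤ 2 * k + r % 2)
    have h1 : ((2 * k + r % 2 : ℤ) : ℝ) ≤ 2 * c - 1 := by
      exact_mod_cast (by omega : 2 * k + r % 2 ≤ 2 * c - 1)
    simp only [staggeredGrid, PiLp.toLp_apply, Set.mem_Icc]
    exact ⟨mul_nonneg (by positivity) h0, (mul_le_mul_of_nonneg_left h1 (by positivity)).trans hc⟩
  · have h1 : (r : ℝ) ≤ R - 1 := by exact_mod_cast (by omega : r ≤ R - 1)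
    simp only [staggeredGrid, PiLp.toLp_apply, Set.mem_Icc]
    exact ⟨mul_nonneg hb (by exact_mod_cast hr0), (mul_le_mul_of_nonneg_left h1 hb).trans hR⟩

/-- There exist 48 points in the unit square `[0,1]²` with all pairwise
Euclidean distances at least 0.168 (point-spreading form of the improved
packing of 48 equal disks in a square). -/
theorem packing_48_disks :
    ∃ p : Fin 48 → EuclideanSpace ℝ (Fin 2),
      (∀ i, ∀ t : Fin 2, p i t ∈ Set.Icc (0 : ℝ) 1) ∧
      ∀ i j, i ≠ j → (0.168 : ℝ) ≤ ‖p i - p j‖ := by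
  refine ⟨fun i => staggeredGrid 0.18 (1 / 7) (i / 8 : ℕ) (i % 8 : ℕ), fun i t => ?_,
    fun i j hij => ?_⟩
  · exact staggeredGrid_mem_Icc (c := 6) (R := 8) (by norm_num) (by norm_num) (by norm_num)
      (by norm_num) ⟨by positivity, by omega⟩ ⟨by positivity, by omega⟩ t
  · rw [← dist_eq_norm]
    refine le_dist_staggeredGrid (by norm_num) (by norm_num) (by norm_num) (by norm_num) ?_
    have hij' := Fin.val_ne_of_ne hij
    simp only [ne_eq, Prod.mk.injEq, Nat.cast_inj]
    omega
end
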